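/- Let x, y, z be left I-states of size k with x and y not too far. Then the following two conditions are equivalent: (a) max(h_i^x, h_i^y) ≤ h_i^z < min(h_{i+1}^x, h_{i+1}^y) for all 1 ≤ i ≤ n−k; (b) z is not too far from x, z is not too far from y, and z_i ≤ x_i and z_i ≤ y_i for all 1 ≤ i ≤ k. (Condition (b) is the condition x ⪯ z ⪰ y with z pairwise not too far from x and y appearing in the definition of fork elements, and condition (a) says the corresponding fork diagram is oriented.) -/

import Mathlib

/-- The `i`-th smallest element (0-indexed) of a finite set of natural numbers. -/
def nthElt (s : Finset ℕ) (i : ℕ) : ℕ := (s.sort (· ≤ ·)).getD i 0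

/-- The hole set of an I-state: the complement `{0, …, n} \ s`. -/
def holes (n : ℕ) (s : Finset ℕ) : Finset ℕ := Finset.range (n + 1) \ s

/-- The `i`-th hole (0-indexed): `hnth n s i` is `h_{i+1}^s` in 1-indexed notation. -/
def hnth (n : ℕ) (s : Finset ℕ) (i : ℕ) : ℕ := nthElt (holes n s) i

/-- Two I-states of size `k` are too far if `|x_i − y_i| > 1` for some `i`. -/
def TooFar (k : ℕ) (x y : Finset ℕ) : Prop :=
  ∃ i < k, 1 < ((nthElt x i : ℤ) - (nthElt y i : ℤ)).natAbs

/-!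
Everything is read off the counting functions `N_s t = #{a ∈ s | a < t}` (`Nat.count (· ∈ s) t`).
The Galois correspondence `s_j < t ↔ j < N_s t` turns componentwise inequalities between sorted
sequences into pointwise inequalities between counting functions, and the holes of `s` are
counted by `min t (n + 1) - N_s t`. In these terms both the interlacing
`h^x_i ≤ h^z_i < h^x_{i+1}` and the condition `z_j ≤ x_j ≤ z_j + 1` say that
`N_x t ≤ N_z t ≤ N_x (t + 1)` for all `t`, and (a) splits into this condition for the pairs
`(x, z)` and `(y, z)`.
-/

open Finset

theorem nthElt_eq_nth (s : Finset ℕ) (j : ℕ) : nthElt s j = Nat.nth (· ∈ s) j := by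
  have hf : (Set.ofPred (· ∈ s)).Finite := s.finite_toSet
  rw [Nat.nth_eq_getD_sort hf]
  simp [nthElt]

theorem nthElt_lt_iff_lt_count {s : Finset ℕ} {j : ℕ} (hj : j < #s) {t : ℕ} :
    nthElt s j < t ↔ j < Nat.count (· ∈ s) t := by
  have hf : (Set.ofPred (· ∈ s)).Finite := s.finite_toSet
  have hs : j < #hf.toFinset := by simpa using hj
  rw [nthElt_eq_nth]
  refine ⟨fun h => ?_, Nat.nth_lt_of_lt_count⟩
  rw [← Nat.count_nth_of_lt_card_finite hf hs]
  exact Nat.count_strict_mono (Nat.nth_mem_of_lt_card hf hs) h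

theorem count_mem_le_card (s : Finset ℕ) (t : ℕ) : Nat.count (· ∈ s) t ≤ #s := by
  simpa using Nat.count_le_card (p := (· ∈ s)) s.finite_toSet t

theorem count_mem_eq_card {s : Finset ℕ} {n t : ℕ} (hs : s ⊆ range n) (ht : n ≤ t) :
    Nat.count (· ∈ s) t = #s := by
  rw [Nat.count_eq_card_filter_range]
  congr 1
  ext a
  simp only [mem_filter, mem_range, and_iff_right_iff_imp]
  exact fun ha => (mem_range.1 (hs ha)).trans_le ht

theorem forall_nthElt_le_add_iff {a b : Finset ℕ} {m d : ℕ} (ha : m ≤ #a) (hb : m ≤ #b) :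
    (∀ j < m, nthElt b j ≤ nthElt a j + d) ↔
      ∀ t, min m (Nat.count (· ∈ a) t) ≤ Nat.count (· ∈ b) (t + d) := by
  constructor
  · intro h t
    by_contra! hlt
    set j := Nat.count (· ∈ b) (t + d)
    have hat : nthElt a j < t := (nthElt_lt_iff_lt_count (by omega)).2 (by omega)
    have hbt : ¬ nthElt b j < t + d := by rw [nthElt_lt_iff_lt_count (by omega)]; omega
    have := h j (by omega)
    omega
  · intro h j hj
    have hat : j < Nat.count (· ∈ a) (nthElt a j + 1) :=
      (nthElt_lt_iff_lt_count (by omega)).1 (Nat.lt_succ_self _)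
    have hbt : nthElt b j < nthElt a j + 1 + d :=
      (nthElt_lt_iff_lt_count (by omega)).2 (by have := h (nthElt a j + 1); omega)
    omega

theorem forall_nthElt_lt_nthElt_succ_iff {a b : Finset ℕ} {m : ℕ} (ha : m + 1 ≤ #a)
    (hb : m ≤ #b) :
    (∀ j < m, nthElt b j < nthElt a (j + 1)) ↔
      ∀ t, min m (Nat.count (· ∈ a) (t + 1) - 1) ≤ Nat.count (· ∈ b) t := by
  constructor
  · intro h t
    by_contra! hlt
    set j := Nat.count (· ∈ b) t
    have hat : nthElt a (j + 1) < t + 1 := (nthElt_lt_iff_lt_count (by omega)).2 (by omega)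
    have hbt : ¬ nthElt b j < t := by rw [nthElt_lt_iff_lt_count (by omega)]; omega
    have := h j (by omega)
    omega
  · intro h j hj
    by_contra! hle
    have hat : j + 1 < Nat.count (· ∈ a) (nthElt b j + 1) :=
      (nthElt_lt_iff_lt_count (by omega)).1 (by omega)
    have hbt : ¬ j < Nat.count (· ∈ b) (nthElt b j) := by
      rw [← nthElt_lt_iff_lt_count (by omega)]; exact lt_irrefl _
    have := h (nthElt b j)
    omega

theorem forall_nthElt_le_add_iff_count_le {a b : Finset ℕ} {m : ℕ} (ha : #a = m) (hb : #b = m)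
    (d : ℕ) :
    (∀ j < m, nthElt b j ≤ nthElt a j + d) ↔
      ∀ t, Nat.count (· ∈ a) t ≤ Nat.count (· ∈ b) (t + d) := by
  rw [forall_nthElt_le_add_iff ha.ge hb.ge]
  simp only [← ha, min_eq_right (count_mem_le_card a _)]

section Holes

variable {n : ℕ} {s : Finset ℕ}

theorem card_holes (hs : s ⊆ range n) : #(holes n s) = n + 1 - #s := by
  rw [holes, card_sdiff_of_subset (hs.trans (range_subset_range.2 n.le_succ)), card_range]

theorem count_holes_add_count (hs : s ⊆ range n) (t : ℕ) :
    Nat.count (· ∈ holes n s) t + Nat.count (· ∈ s) t = min t (n + 1) := by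
  rw [← card_range (min t (n + 1)), ← card_filter_add_card_filter_not (· ∉ s),
    Nat.count_eq_card_filter_range, Nat.count_eq_card_filter_range]
  congr 2 <;> ext a
  · simp only [holes, mem_filter, mem_range, mem_sdiff, lt_min_iff, and_assoc]
  · have has : a ∈ s → a < n := fun h => mem_range.1 (hs h)
    simp only [mem_filter, mem_range, lt_min_iff, not_not]
    exact ⟨fun ⟨hat, h⟩ => ⟨⟨hat, (has h).trans n.lt_succ_self⟩, h⟩, fun ⟨⟨hat, _⟩, h⟩ => ⟨hat, h⟩⟩

theorem count_holes_le (hs : s ⊆ range n) {t : ℕ} (ht : t ≤ n) :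
    Nat.count (· ∈ holes n s) t ≤ n - #s := by
  have hmono := Nat.count_monotone (· ∈ holes n s) ht
  have := count_holes_add_count hs n
  rw [count_mem_eq_card hs le_rfl] at this
  omega

end Holes

section Interlacing

variable {n k : ℕ} {x z : Finset ℕ}

theorem forall_hnth_le_hnth_iff_count_le (hx : x ⊆ range n) (hz : z ⊆ range n)
    (hxk : #x = k) (hzk : #z = k) :
    (∀ i < n - k, hnth n x i ≤ hnth n z i) ↔
      ∀ t, Nat.count (· ∈ x) t ≤ Nat.count (· ∈ z) t := by
  have key := forall_nthElt_le_add_iff (a := holes n z) (b := holes n x) (d := 0)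
    (m := n - k) (by rw [card_holes hz]; omega) (by rw [card_holes hx]; omega)
  simp only [add_zero] at key
  refine key.trans (forall_congr' fun t => ?_)
  have hxt := count_holes_add_count hx t
  have hzt := count_holes_add_count hz t
  rcases le_total t n with htn | hnt
  · have := count_holes_le hz htn
    have := Nat.count_le (p := (· ∈ x)) (n := t)
    omega
  · rw [count_mem_eq_card hx hnt, count_mem_eq_card hz hnt] at *
    omega

theorem forall_hnth_lt_hnth_succ_iff_count_le (hx : x ⊆ range n) (hz : z ⊆ range n)
    (hxk : #x = k) (hzk : #z = k) :
    (∀ i < n - k, hnth n z i < hnth n x (i + 1)) ↔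
      ∀ t, Nat.count (· ∈ z) t ≤ Nat.count (· ∈ x) (t + 1) := by
  have hxn : #x ≤ n := by simpa using card_le_card hx
  have key := forall_nthElt_lt_nthElt_succ_iff (a := holes n x) (b := holes n z)
    (m := n - k) (by rw [card_holes hx]; omega) (by rw [card_holes hz]; omega)
  refine key.trans (forall_congr' fun t => ?_)
  have hxt := count_holes_add_count hx (t + 1)
  have hzt := count_holes_add_count hz t
  rcases Nat.lt_or_ge t n with htn | hnt
  · have := count_holes_le hx (t := t + 1) htn
    have := Nat.count_le (p := (· ∈ z)) (n := t)
    omega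
  · rw [count_mem_eq_card hx (by omega), count_mem_eq_card hz hnt] at *
    omega

theorem holes_interlace_iff (hx : x ⊆ range n) (hz : z ⊆ range n) (hxk : #x = k)
    (hzk : #z = k) :
    (∀ i < n - k, hnth n x i ≤ hnth n z i ∧ hnth n z i < hnth n x (i + 1)) ↔
      ∀ j < k, nthElt z j ≤ nthElt x j ∧ nthElt x j ≤ nthElt z j + 1 := by
  have hzx := forall_nthElt_le_add_iff_count_le hxk hzk 0
  simp only [add_zero] at hzx
  rw [forall₂_and, forall₂_and, forall_hnth_le_hnth_iff_count_le hx hz hxk hzk,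
    forall_hnth_lt_hnth_succ_iff_count_le hx hz hxk hzk, hzx,
    forall_nthElt_le_add_iff_count_le hzk hxk 1]

end Interlacing

theorem not_tooFar_and_le_iff {k : ℕ} {x z : Finset ℕ} :
    (¬ TooFar k z x ∧ ∀ j < k, nthElt z j ≤ nthElt x j) ↔
      ∀ j < k, nthElt z j ≤ nthElt x j ∧ nthElt x j ≤ nthElt z j + 1 := by
  simp only [TooFar, not_exists, not_and, not_lt, ← forall₂_and]
  exact forall₂_congr fun j _ => by omega

theorem oriented_iff_not_too_far_and_le_general (n k : ℕ) (x y z : Finset ℕ)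
    (hx : x ⊆ Finset.range n) (hy : y ⊆ Finset.range n) (hz : z ⊆ Finset.range n)
    (hxk : x.card = k) (hyk : y.card = k) (hzk : z.card = k) :
    (∀ i < n - k, max (hnth n x i) (hnth n y i) ≤ hnth n z i ∧
        hnth n z i < min (hnth n x (i + 1)) (hnth n y (i + 1))) ↔
    (¬ TooFar k z x ∧ ¬ TooFar k z y ∧
      ∀ i < k, nthElt z i ≤ nthElt x i ∧ nthElt z i ≤ nthElt y i) := by
  simp only [max_le_iff, lt_min_iff, and_and_and_comm (c := hnth n z _ < _)]
  rw [forall₂_and, holes_interlace_iff hx hz hxk hzk, holes_interlace_iff hy hz hyk hzk,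
    ← not_tooFar_and_le_iff, ← not_tooFar_and_le_iff, forall₂_and]
  tauto

/-- For left I-states `x, y, z` of size `k` with `x, y` not too far, the following are
equivalent: (a) `max(h_i^x, h_i^y) ≤ h_i^z < min(h_{i+1}^x, h_{i+1}^y)` for all
`1 ≤ i ≤ n − k`; (b) `z` is not too far from `x` and from `y`, and `z_i ≤ x_i` and
`z_i ≤ y_i` for all `1 ≤ i ≤ k` (i.e. `x ⪯ z ⪰ y`). -/
theorem oriented_iff_not_too_far_and_le (n k : ℕ) (hkn : k ≤ n) (x y z : Finset ℕ)
    (hx : x ⊆ Finset.range n) (hy : y ⊆ Finset.range n) (hz : z ⊆ Finset.range n)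
    (hxk : x.card = k) (hyk : y.card = k) (hzk : z.card = k)
    (hfar : ¬ TooFar k x y) :
    (∀ i < n - k, max (hnth n x i) (hnth n y i) ≤ hnth n z i ∧
        hnth n z i < min (hnth n x (i + 1)) (hnth n y (i + 1))) ↔
    (¬ TooFar k z x ∧ ¬ TooFar k z y ∧
      ∀ i < k, nthElt z i ≤ nthElt x i ∧ nthElt z i ≤ nthElt y i) :=
  oriented_iff_not_too_far_and_le_general n k x y z hx hy hz hxk hyk hzk
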